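/- Let H be a separable complex Hilbert space and let x, y : ℤ → H form a pair of dual Riesz bases for H. Then the family consisting of (n ↦ x_{2n}) together with (n ↦ x_{2n+1} − x_{2n}) is a Riesz basis for H whose dual Riesz basis is (n ↦ y_{2n} + y_{2n+1}) together with (n ↦ y_{2n+1}); in particular, for every F ∈ H the family over (k,n) ∈ Fin 2 × ℤ whose terms are ⟨F, x_{2n}⟩(y_{2n} + y_{2n+1}) for k = 0 and ⟨F, x_{2n+1} − x_{2n}⟩ y_{2n+1} for k = 1 has sum F (unconditional convergence in H). -/

import Mathlib

noncomputable section
open scoped Classical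

local notation "⟪" f ", " g "⟫" => @inner ℂ _ _ g f

/-- A family `x : ι → H` is a Riesz basis for `H` if it is the image of a Hilbert
(orthonormal) basis of `H` under a continuous linear equivalence of `H`. -/
def IsRieszBasis {H : Type*} [NormedAddCommGroup H] [InnerProductSpace ℂ H]
    {ι : Type*} (x : ι → H) : Prop :=
  ∃ (e : HilbertBasis ι ℂ H) (T : H ≃L[ℂ] H), ∀ i, x i = T (e i)

/-- Families `x, y : ι → H` form a pair of dual Riesz bases: both are Riesz bases,
they are biorthogonal, and `∑ᵢ ⟨f, yᵢ⟩ xᵢ = f` for every `f` (inner product linear in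
the first argument, conjugate-linear in the second). -/
def IsDualRieszBasisPair {H : Type*} [NormedAddCommGroup H] [InnerProductSpace ℂ H]
    {ι : Type*} (x y : ι → H) : Prop :=
  IsRieszBasis x ∧ IsRieszBasis y ∧
    (∀ i j, ⟪x i, y j⟫ = if i = j then (1 : ℂ) else 0) ∧
    ∀ f : H, HasSum (fun i => ⟪f, y i⟫ • x i) f


/-!
Write `x = T ∘ e` with `e` a Hilbert basis and reindex `e` by `(k, n) ↦ 2n + k`. Then
`z = T ∘ S ∘ e` with `S = 1 - N`, where `N` sends `e (2n+1)` to `e (2n)` and kills `e (2n)`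
(a swap of coordinates composed with the projection onto the odd ones). As `N² = 0`, `S` is
invertible, so `z` is a Riesz basis. A direct computation shows that `w` is biorthogonal to `z`,
which forces `w = (G⋆)⁻¹ ∘ e` for `G = T ∘ S`; both expansions are then the Hilbert basis
expansions of `G⁻¹ f` and `G⋆ f`, pushed forward by `G` and `(G⋆)⁻¹`.
-/

open Submodule

namespace HilbertBasis

variable {𝕜 E : Type*} [RCLike 𝕜] [NormedAddCommGroup E] [InnerProductSpace 𝕜 E] {ι κ : Type*}

lemma ext_inner (b : HilbertBasis ι 𝕜 E) {u v : E}
    (h : ∀ i, inner 𝕜 (b i) u = inner 𝕜 (b i) v) : u = v :=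
  b.repr.injective <| lp.ext <| funext fun i => by simp only [b.repr_apply_apply, h]

lemma continuousLinearMap_ext {F : Type*} [NormedAddCommGroup F] [NormedSpace 𝕜 F]
    (b : HilbertBasis ι 𝕜 E) {f g : E →L[𝕜] F} (h : ∀ i, f (b i) = g (b i)) : f = g :=
  ContinuousLinearMap.ext_on (Submodule.dense_iff_topologicalClosure_eq_top.mpr b.dense_span)
    (Set.forall_mem_range.mpr h)

variable [CompleteSpace E]

def reindex (b : HilbertBasis ι 𝕜 E) (σ : κ ≃ ι) : HilbertBasis κ 𝕜 E :=
  .mk (b.orthonormal.comp σ σ.injective) (by rw [σ.surjective.range_comp, b.dense_span])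

@[simp] lemma reindex_apply (b : HilbertBasis ι 𝕜 E) (σ : κ ≃ ι) (k : κ) :
    b.reindex σ k = b (σ k) :=
  congrFun (HilbertBasis.coe_mk _ _) k

lemma exists_linearIsometryEquiv_apply (b : HilbertBasis ι 𝕜 E) (σ : ι ≃ ι) :
    ∃ U : E ≃ₗᵢ[𝕜] E, ∀ i, U (b i) = b (σ i) :=
  ⟨b.repr.trans (b.reindex σ).repr.symm, fun i => by classical simp [b.repr_self]⟩

lemma starProjection_closure_span_image_apply (b : HilbertBasis ι 𝕜 E) (s : Set ι) (i : ι) :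
    (span 𝕜 (b '' s)).topologicalClosure.starProjection (b i) = if i ∈ s then b i else 0 := by
  split_ifs with hi
  · exact starProjection_eq_self_iff.mpr
      (le_topologicalClosure _ (subset_span (Set.mem_image_of_mem b hi)))
  · refine (starProjection_apply_eq_zero_iff _).mpr ?_
    rw [orthogonal_closure, mem_orthogonal]
    intro u hu
    obtain ⟨l, hl, rfl⟩ := (Finsupp.mem_span_image_iff_linearCombination 𝕜).mp hu
    exact b.orthonormal.inner_finsupp_eq_zero hi hl

lemma exists_sq_eq_zero_shift (b : HilbertBasis (Fin 2 × κ) 𝕜 E) :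
    ∃ N : E →L[𝕜] E, N ^ 2 = 0 ∧ ∀ n, N (b (0, n)) = 0 ∧ N (b (1, n)) = b (0, n) := by
  obtain ⟨U, hU⟩ := b.exists_linearIsometryEquiv_apply
    ((Equiv.swap 0 1).prodCongr (Equiv.refl κ))
  set P := (span 𝕜 (b '' {i | i.1 = 1})).topologicalClosure.starProjection
  have hP := b.starProjection_closure_span_image_apply {i | i.1 = 1}
  set N : E →L[𝕜] E := (U.toContinuousLinearEquiv : E →L[𝕜] E) ∘L P
  have hN : ∀ n, N (b (0, n)) = 0 ∧ N (b (1, n)) = b (0, n) := fun n => by simp [N, P, hP, hU]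
  refine ⟨N, b.continuousLinearMap_ext fun ⟨k, n⟩ => ?_, hN⟩
  fin_cases k <;> simp [pow_two, (hN n).1, (hN n).2]

lemma exists_continuousLinearEquiv_shear (b : HilbertBasis (Fin 2 × κ) 𝕜 E) :
    ∃ S : E ≃L[𝕜] E, ∀ n, S (b (0, n)) = b (0, n) ∧ S (b (1, n)) = b (1, n) - b (0, n) := by
  obtain ⟨N, hN2, hN⟩ := b.exists_sq_eq_zero_shift
  refine ⟨.ofUnit (IsNilpotent.isUnit_one_sub ⟨2, hN2⟩).unit, fun n => ?_⟩
  simp [ContinuousLinearEquiv.ofUnit, hN n]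

end HilbertBasis

namespace ContinuousLinearEquiv

variable {𝕜 E F : Type*} [RCLike 𝕜] [NormedAddCommGroup E] [InnerProductSpace 𝕜 E]
  [CompleteSpace E] [NormedAddCommGroup F] [InnerProductSpace 𝕜 F] [CompleteSpace F]

def adjoint (G : E ≃L[𝕜] F) : F ≃L[𝕜] E :=
  equivOfInverse (ContinuousLinearMap.adjoint G) (ContinuousLinearMap.adjoint G.symm)
    (fun v => by rw [← ContinuousLinearMap.comp_apply, ← ContinuousLinearMap.adjoint_comp,
      G.coe_comp_coe_symm, ContinuousLinearMap.adjoint_id, ContinuousLinearMap.id_apply])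
    (fun v => by rw [← ContinuousLinearMap.comp_apply, ← ContinuousLinearMap.adjoint_comp,
      G.coe_symm_comp_coe, ContinuousLinearMap.adjoint_id, ContinuousLinearMap.id_apply])

lemma adjoint_apply (G : E ≃L[𝕜] F) (v : F) :
    G.adjoint v = ContinuousLinearMap.adjoint (G : E →L[𝕜] F) v :=
  rfl

lemma adjoint_symm (G : E ≃L[𝕜] F) : G.adjoint.symm = G.symm.adjoint := rfl

@[simp] lemma adjoint_adjoint (G : E ≃L[𝕜] F) : G.adjoint.adjoint = G :=
  coe_injective (ContinuousLinearMap.adjoint_adjoint _)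

end ContinuousLinearEquiv

section RieszBasis

variable {H : Type*} [NormedAddCommGroup H] [InnerProductSpace ℂ H] [CompleteSpace H] {ι : Type*}

lemma HilbertBasis.hasSum_inner_adjoint_symm_smul (E : HilbertBasis ι ℂ H) (G : H ≃L[ℂ] H)
    (f : H) : HasSum (fun i => ⟪f, G.adjoint.symm (E i)⟫ • G (E i)) f := by
  have hcoeff : ∀ i, E.repr (G.symm f) i = ⟪f, G.adjoint.symm (E i)⟫ := fun i => by
    rw [E.repr_apply_apply, ContinuousLinearEquiv.adjoint_symm,
      ContinuousLinearEquiv.adjoint_apply, ContinuousLinearMap.adjoint_inner_left]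
    rfl
  simpa [hcoeff] using (E.hasSum_repr (G.symm f)).mapL (G : H →L[ℂ] H)

lemma eq_adjoint_symm_of_biorthogonal (E : HilbertBasis ι ℂ H) (G : H ≃L[ℂ] H) {z w : ι → H}
    (hz : ∀ i, z i = G (E i)) (hzw : ∀ i j, ⟪z i, w j⟫ = if i = j then 1 else 0) (j : ι) :
    w j = G.adjoint.symm (E j) := by
  rw [ContinuousLinearEquiv.eq_symm_apply]
  refine E.ext_inner fun i => ?_
  rw [ContinuousLinearEquiv.adjoint_apply, ContinuousLinearMap.adjoint_inner_right,
    ContinuousLinearEquiv.coe_coe, ← hz, orthonormal_iff_ite.mp E.orthonormal, ← inner_conj_symm,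
    hzw]
  split_ifs <;> simp

theorem isDualRieszBasisPair_of_biorthogonal (E : HilbertBasis ι ℂ H) (G : H ≃L[ℂ] H)
    {z w : ι → H} (hz : ∀ i, z i = G (E i))
    (hzw : ∀ i j, ⟪z i, w j⟫ = if i = j then 1 else 0) :
    IsDualRieszBasisPair z w ∧ ∀ f, HasSum (fun i => ⟪f, z i⟫ • w i) f := by
  have hw := eq_adjoint_symm_of_biorthogonal E G hz hzw
  refine ⟨⟨⟨E, G, hz⟩, ⟨E, G.adjoint.symm, hw⟩, hzw, fun f => ?_⟩, fun f => ?_⟩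
  · simpa only [hz, hw] using E.hasSum_inner_adjoint_symm_smul G f
  · simpa only [hz, hw, ContinuousLinearEquiv.adjoint_symm, ContinuousLinearEquiv.adjoint_adjoint,
      ContinuousLinearEquiv.symm_symm] using E.hasSum_inner_adjoint_symm_smul G.adjoint.symm f

end RieszBasis

theorem stmt11_general {H : Type*} [NormedAddCommGroup H] [InnerProductSpace ℂ H]
    [CompleteSpace H]
    (x y : ℤ → H) (hxy : IsDualRieszBasisPair x y)
    (z w : Fin 2 × ℤ → H)
    (hz : ∀ i : Fin 2 × ℤ,
      z i = ![x (2 * i.2), x (2 * i.2 + 1) - x (2 * i.2)] i.1)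
    (hw : ∀ i : Fin 2 × ℤ,
      w i = ![y (2 * i.2) + y (2 * i.2 + 1), y (2 * i.2 + 1)] i.1) :
    IsDualRieszBasisPair z w ∧
      ∀ F : H, HasSum (fun i : Fin 2 × ℤ => ⟪F, z i⟫ • w i) F := by
  obtain ⟨⟨e, T, hx⟩, -, hxy, -⟩ := hxy
  set E := e.reindex ((Equiv.prodComm _ _).trans (Int.divModEquiv 2).symm)
  have hE : ∀ k n, E (k, n) = e (2 * n + k) := fun k n => by simp [E, mul_comm]
  obtain ⟨S, hS⟩ := E.exists_continuousLinearEquiv_shear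
  simp only [hE, Fin.isValue, Fin.val_zero, Fin.val_one, Nat.cast_zero, Nat.cast_one,
    add_zero] at hS
  have hodd : ∀ a b : ℤ, 2 * a ≠ 2 * b + 1 := by omega
  refine isDualRieszBasisPair_of_biorthogonal E (S.trans T) (fun ⟨k, n⟩ => ?_) ?_
  · fin_cases k <;> simp [hz, hx, hE, hS]
  · rintro ⟨k, n⟩ ⟨l, m⟩
    fin_cases k <;> fin_cases l <;>
      simp [hz, hw, inner_add_left, inner_sub_right, hxy, hodd, (hodd _ _).symm]

theorem stmt11 {H : Type*} [NormedAddCommGroup H] [InnerProductSpace ℂ H]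
    [CompleteSpace H] [TopologicalSpace.SeparableSpace H]
    (x y : ℤ → H) (hxy : IsDualRieszBasisPair x y)
    (z w : Fin 2 × ℤ → H)
    (hz : ∀ i : Fin 2 × ℤ,
      z i = ![x (2 * i.2), x (2 * i.2 + 1) - x (2 * i.2)] i.1)
    (hw : ∀ i : Fin 2 × ℤ,
      w i = ![y (2 * i.2) + y (2 * i.2 + 1), y (2 * i.2 + 1)] i.1) :
    IsDualRieszBasisPair z w ∧
      ∀ F : H, HasSum (fun i : Fin 2 × ℤ => ⟪F, z i⟫ • w i) F :=
  stmt11_general x y hxy z w hz hw
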